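/- arXiv:math/0609393 — 4 statements merged into one kernel-verified Lean document; each statement's English description precedes it below -/
import Mathlib

section
/- For n ≥ 3, ℤ[ζₙ + ζₙ⁻¹] is a free ℤ-module of rank φ(n)/2, with ℤ-basis {1, (ζₙ+ζₙ⁻¹), …, (ζₙ+ζₙ⁻¹)^{φ(n)/2−1}}. -/
open IntermediateField Polynomial

set_option synthInstance.maxHeartbeats 1000000
set_option maxHeartbeats 2000000

theorem key_deg (n : ℕ) (hn : 3 ≤ n) (ζ : ℂ) (hζ : IsPrimitiveRoot ζ n) :
    (minpoly ℚ (ζ + ζ⁻¹)).natDegree = Nat.totient n / 2 := by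
  have hn0 : (n : ℕ) ≠ 0 := by omega
  have hnorm : ‖ζ‖ = 1 := Complex.norm_eq_one_of_pow_eq_one hζ.pow_eq_one hn0
  have hconj : (starRingEnd ℂ) ζ = ζ⁻¹ := (Complex.inv_eq_conj hnorm).symm
  set x := ζ + ζ⁻¹ with hxdef
  have hxreal : (starRingEnd ℂ) x = x := by
    rw [hxdef, map_add, hconj, map_inv₀, hconj, inv_inv, add_comm]
  have hζint : IsIntegral ℚ ζ := (hζ.isIntegral (by omega)).tower_top
  have hζinvint : IsIntegral ℚ ζ⁻¹ := by
    have h1 : ζ ^ (n - 1) * ζ = 1 := by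
      rw [← pow_succ, Nat.sub_add_cancel (by omega), hζ.pow_eq_one]
    rw [(eq_inv_of_mul_eq_one_left h1).symm]
    exact hζint.pow _
  have hxint : IsIntegral ℚ x := hζint.add hζinvint
  set E : IntermediateField ℚ ℂ := ℚ⟮x⟯ with hE
  have hratreal : ∀ q : ℚ, (starRingEnd ℂ) (algebraMap ℚ ℂ q) = algebraMap ℚ ℂ q := by
    intro q; simp [Complex.conj_ofReal]
  set R : IntermediateField ℚ ℂ :=
    { carrier := {z : ℂ | (starRingEnd ℂ) z = z}
      mul_mem' := by intro a b ha hb; simp_all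
      one_mem' := by simp
      add_mem' := by intro a b ha hb; simp_all
      zero_mem' := by simp
      algebraMap_mem' := hratreal
      inv_mem' := by intro a ha; simp_all } with hR
  have hER : E ≤ R := by
    rw [hE]
    exact IntermediateField.adjoin_le_iff.mpr (by simpa [hR] using hxreal)
  have hζnotE : ζ ∉ E := by
    intro h
    have : (starRingEnd ℂ) ζ = ζ := hER h
    rw [hconj] at this
    have h2 : ζ ^ 2 = 1 := by
      have := congrArg (· * ζ) this
      simpa [sq, inv_mul_cancel₀ (hζ.ne_zero hn0)] using this.symm
    have := Nat.le_of_dvd two_pos (hζ.dvd_of_pow_eq_one 2 h2)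
    omega
  -- minpoly E ζ has degree 2
  set x' : E := ⟨x, IntermediateField.mem_adjoin_simple_self ℚ x⟩ with hx'
  set p : E[X] := X ^ 2 - C x' * X + 1 with hp
  have hpmonic : p.Monic := by rw [hp]; monicity!
  have haev : Polynomial.aeval ζ p = 0 := by
    have hxx : (algebraMap E ℂ) x' = x := rfl
    rw [hp, map_add, map_sub, map_mul, map_pow, aeval_X, aeval_C, map_one, hxx, hxdef]
    have hz : ζ ≠ 0 := hζ.ne_zero hn0
    field_simp
    ring
  have hζintE : IsIntegral E ζ := ⟨p, hpmonic, haev⟩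
  have hdvd : minpoly E ζ ∣ p := minpoly.dvd E ζ haev
  have hple : (minpoly E ζ).natDegree ≤ 2 := by
    have := Polynomial.natDegree_le_of_dvd hdvd hpmonic.ne_zero
    rwa [show p.natDegree = 2 by rw [hp]; compute_degree!] at this
  have hne1 : (minpoly E ζ).natDegree ≠ 1 := by
    intro h1
    have : ζ ∈ (algebraMap E ℂ).range := by
      have := (minpoly.natDegree_eq_one_iff).mp h1
      exact this
    obtain ⟨y, hy⟩ := this
    exact hζnotE (hy ▸ y.2)
  have hpos : 0 < (minpoly E ζ).natDegree := minpoly.natDegree_pos hζintE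
  have hdeg2 : (minpoly E ζ).natDegree = 2 := by omega
  -- tower
  have hxK : x ∈ ℚ⟮ζ⟯ := by
    apply add_mem (IntermediateField.mem_adjoin_simple_self ℚ ζ)
    exact inv_mem (IntermediateField.mem_adjoin_simple_self ℚ ζ)
  have hEζ : (IntermediateField.adjoin E ({ζ} : Set ℂ)).restrictScalars ℚ = ℚ⟮ζ⟯ := by
    erw [hE, IntermediateField.adjoin_adjoin_left]
    apply le_antisymm
    · apply IntermediateField.adjoin_le_iff.mpr
      rintro y (rfl | rfl)
      · exact hxK
      · exact IntermediateField.mem_adjoin_simple_self ℚ _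
    · exact IntermediateField.adjoin.mono ℚ _ _ Set.subset_union_right
  -- finrank computations
  have hfin1 : Module.finrank ℚ ℚ⟮ζ⟯ = Nat.totient n := by
    rw [IntermediateField.adjoin.finrank hζint,
      ← Polynomial.cyclotomic_eq_minpoly_rat hζ (by omega),
      Polynomial.natDegree_cyclotomic]
  have hfin2 : Module.finrank ℚ E = (minpoly ℚ x).natDegree := by
    rw [hE]; exact IntermediateField.adjoin.finrank hxint
  have hfin3 : Module.finrank E (IntermediateField.adjoin E ({ζ} : Set ℂ)) = 2 := by
    rw [← hdeg2]
    exact IntermediateField.adjoin.finrank hζintE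
  have htower : Module.finrank ℚ E *
      Module.finrank E (IntermediateField.adjoin E ({ζ} : Set ℂ)) = Nat.totient n := by
    rw [Module.finrank_mul_finrank ℚ E (IntermediateField.adjoin E ({ζ} : Set ℂ))]
    rw [← hfin1, ← hEζ]
    rfl
  rw [hfin2, hfin3] at htower
  omega

/-- For `n ≥ 3`, `ℤ[ζₙ + ζₙ⁻¹]` is a free ℤ-module of rank `φ(n)/2` with
ℤ-basis `{1, (ζₙ+ζₙ⁻¹), …, (ζₙ+ζₙ⁻¹)^{φ(n)/2−1}}`. -/
theorem stmt6 (n : ℕ) (hn : 3 ≤ n) (ζ : ℂ) (hζ : IsPrimitiveRoot ζ n) :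
    ∃ B : Module.Basis (Fin (Nat.totient n / 2)) ℤ
        (Algebra.adjoin ℤ ({ζ + ζ⁻¹} : Set ℂ)),
      ∀ i, (B i : ℂ) = (ζ + ζ⁻¹) ^ (i : ℕ) := by
  have hn0 : (n : ℕ) ≠ 0 := by omega
  have hζint : IsIntegral ℤ ζ := hζ.isIntegral (by omega)
  have hζinvint : IsIntegral ℤ ζ⁻¹ := by
    have h1 : ζ ^ (n - 1) * ζ = 1 := by
      rw [← pow_succ, Nat.sub_add_cancel (by omega), hζ.pow_eq_one]
    rw [(eq_inv_of_mul_eq_one_left h1).symm]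
    exact hζint.pow _
  have hx : IsIntegral ℤ (ζ + ζ⁻¹) := hζint.add hζinvint
  have hdeg : (minpoly ℤ (ζ + ζ⁻¹)).natDegree = Nat.totient n / 2 := by
    have h1 := minpoly.isIntegrallyClosed_eq_field_fractions ℚ ℂ hx
    have h2 := key_deg n hn ζ hζ
    rw [show (algebraMap ℂ ℂ) (ζ + ζ⁻¹) = ζ + ζ⁻¹ from rfl] at h1
    rwa [h1, (minpoly.monic hx).natDegree_map] at h2
  let pb := Algebra.adjoin.powerBasis' hx
  have hdim : pb.dim = Nat.totient n / 2 := by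
    rw [show pb.dim = (minpoly ℤ (ζ + ζ⁻¹)).natDegree from rfl, hdeg]
  refine ⟨pb.basis.reindex (finCongr hdim), fun i => ?_⟩
  rw [Module.Basis.reindex_apply, pb.basis_eq_pow]
  have hgen : (pb.gen : ℂ) = ζ + ζ⁻¹ := by
    rw [show pb.gen = ⟨ζ + ζ⁻¹, _⟩ from Algebra.adjoin.powerBasis'_gen hx]
  rw [SubmonoidClass.coe_pow, hgen]

  congr 1
end

section
/- For n ∈ ℕ with n ∉ {1,2,3,4,6}, the set ℤ[ζₙ], viewed as a subset of ℂ ≅ ℝ², is dense in ℝ². -/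
/-!
Write `ζ = exp (2πi·k/n)` with `k` coprime to `n`. Then `2 Re ζ = ζ + ζ⁻¹ = 2 cos (2kπ/n)` lies in
`ℤ[ζ]`, and for `n ∉ {1,2,3,4,6}` the reduced denominator of `2k/n` exceeds `3`, so by Niven's
theorem `Re ζ` is irrational. Hence `2ℤ + 2 Re ζ · ℤ` is dense in `ℝ` and the closure of `ℤ[ζ]`,
a closed subring, contains `ℝ`. As `ζ` is not real, that subring also contains `ℝ + ℝζ = ℂ`.
-/

open Complex

lemma Rat.den_natCast_div_natCast_of_coprime {a b : ℕ} (hb : b ≠ 0) (h : a.Coprime b) :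
    ((a : ℚ) / b).den = b := by
  have := Rat.den_div_eq_of_coprime (a := a) (b := b) (by omega) (by simpa using h)
  rw [Int.cast_natCast, Int.cast_natCast] at this
  exact Int.ofNat_inj.1 this

lemma three_lt_den_two_mul_div {i n : ℕ} (hi : i.Coprime n) (hn0 : n ≠ 0)
    (hn : n ∉ ({1, 2, 3, 4, 6} : Set ℕ)) : 3 < (2 * i / n : ℚ).den := by
  rcases n.even_or_odd with ⟨m, rfl⟩ | hodd
  · have hm : m ≠ 0 := by omega
    have hcop : i.Coprime m := hi.coprime_dvd_right (Dvd.intro_left 2 (by ring))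
    have hdiv : (2 * i / ↑(m + m) : ℚ) = (i : ℚ) / m := by
      push_cast
      field_simp
      ring
    rw [hdiv, Rat.den_natCast_div_natCast_of_coprime hm hcop]
    simp only [Set.mem_insert_iff, Set.mem_singleton_iff] at hn
    omega
  · have hcop : (2 * i).Coprime n := Nat.Coprime.mul_left (Nat.coprime_two_left.2 hodd) hi
    rw [show (2 * i : ℚ) = ((2 * i : ℕ) : ℚ) by push_cast; ring,
      Rat.den_natCast_div_natCast_of_coprime hn0 hcop]
    obtain ⟨k, rfl⟩ := hodd
    simp only [Set.mem_insert_iff, Set.mem_singleton_iff] at hn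
    omega

lemma IsPrimitiveRoot.irrational_re {ζ : ℂ} {n : ℕ} (hζ : IsPrimitiveRoot ζ n) (hn0 : n ≠ 0)
    (hn : n ∉ ({1, 2, 3, 4, 6} : Set ℕ)) : Irrational ζ.re := by
  obtain ⟨i, -, hi, rfl⟩ := (Complex.isPrimitiveRoot_iff ζ n hn0).1 hζ
  have hre : (exp (2 * Real.pi * I * (i / n))).re = Real.cos (((2 * i / n : ℚ) : ℝ) * Real.pi) := by
    rw [← exp_ofReal_mul_I_re]
    congr 2
    push_cast
    ring
  rw [hre]
  exact irrational_cos_rat_mul_pi (three_lt_den_two_mul_div hi hn0 hn)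

lemma Complex.range_ofReal_subset_closure_of_irrational_re {S : Subring ℂ} {w : ℂ} (hw : w ∈ S)
    (hw' : starRingEnd ℂ w ∈ S) (hirr : Irrational w.re) :
    Set.range ofReal ⊆ closure (S : Set ℂ) := by
  let T := S.comap ofRealHom
  have hgen : ({2 * w.re, 2} : Set ℝ) ⊆ T := by
    rintro x (rfl | rfl)
    · change ((2 * w.re : ℝ) : ℂ) ∈ S
      rw [← add_conj]
      exact add_mem hw hw'
    · change ((2 : ℝ) : ℂ) ∈ S
      exact_mod_cast natCast_mem S 2
  have hdense : Dense (T : Set ℝ) := by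
    refine (dense_addSubgroupClosure_pair_iff.2 ?_).mono
      ((AddSubgroup.closure_le T.toAddSubgroup).2 hgen)
    rwa [mul_div_cancel_left₀ _ two_ne_zero]
  rintro _ ⟨x, rfl⟩
  exact map_mem_closure continuous_ofReal (hdense x) fun y hy => hy

lemma Complex.subring_eq_top_of_range_ofReal_subset {S : Subring ℂ} (hS : Set.range ofReal ⊆ S)
    {w : ℂ} (hw : w ∈ S) (him : w.im ≠ 0) : S = ⊤ := by
  refine eq_top_iff.2 fun z _ => ?_
  have hz : z = ↑(z.re - z.im / w.im * w.re) + ↑(z.im / w.im) * w := by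
    apply Complex.ext <;> simp [field]
  rw [hz]
  exact add_mem (hS ⟨_, rfl⟩) (mul_mem (hS ⟨_, rfl⟩) hw)

lemma Complex.im_ne_zero_of_irrational_re {z : ℂ} (hz : ‖z‖ = 1) (hirr : Irrational z.re) :
    z.im ≠ 0 := by
  intro him
  rcases abs_eq zero_le_one |>.1 ((abs_re_eq_norm.2 him).trans hz) with h | h
  · exact hirr ⟨1, by simp [h]⟩
  · exact hirr ⟨-1, by simp [h]⟩

/-- For `n ∈ ℕ` with `n ∉ {1,2,3,4,6}`, the ring `ℤ[ζₙ]`, viewed as a subset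
of `ℂ ≅ ℝ²`, is dense. -/
theorem stmt7 (n : ℕ) (hn : n ∉ ({1, 2, 3, 4, 6} : Set ℕ)) (hn0 : n ≠ 0)
    (ζ : ℂ) (hζ : IsPrimitiveRoot ζ n) :
    Dense ((Algebra.adjoin ℤ ({ζ} : Set ℂ) : Subalgebra ℤ ℂ) : Set ℂ) := by
  set A := (Algebra.adjoin ℤ ({ζ} : Set ℂ)).toSubring
  have hre : Irrational ζ.re := hζ.irrational_re hn0 hn
  have hnorm : ‖ζ‖ = 1 := hζ.norm'_eq_one hn0
  have hζA : ζ ∈ A := Algebra.self_mem_adjoin_singleton ℤ ζ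
  have hconj : starRingEnd ℂ ζ ∈ A := by
    rw [← inv_eq_conj hnorm,
      ← eq_inv_of_mul_eq_one_left (by rw [pow_sub_one_mul hn0, hζ.pow_eq_one])]
    exact pow_mem hζA _
  have htop : A.topologicalClosure = ⊤ :=
    subring_eq_top_of_range_ofReal_subset
      (range_ofReal_subset_closure_of_irrational_re hζA hconj hre) (A.le_topologicalClosure hζA)
      (im_ne_zero_of_irrational_re hnorm hre)
  rw [dense_iff_closure_eq]
  exact congrArg SetLike.coe htop
end

section
/- Let n ≥ 3 and o₁, o₂ ∈ ℤ[ζₙ]∖{0} be two non-parallel directions. Define the complete grid G_{o₁,o₂} as the set of all points of ℂ lying simultaneously on some line t₁ + ℝo₁ and some line t₂ + ℝo₂ with t₁, t₂ ∈ ℤ[ζₙ]. Then ℤ[ζₙ] ⊆ G_{o₁,o₂} ⊆ M_{o₁,o₂}, where M_{o₁,o₂} is the ℤ[ζₙ+ζₙ⁻¹]-span of {o₁/(αδ−βγ), o₂/(αδ−βγ)} and o₁ = α+βζₙ, o₂ = γ+δζₙ with α,β,γ,δ ∈ ℤ[ζₙ+ζₙ⁻¹]. -/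
/-- Decomposition: every element of ℤ[ζ] is a + b·ζ with a, b ∈ ℤ[ζ+ζ⁻¹]. -/
lemma stmt13_decomp (ζ : ℂ) (hζ1 : ζ * ζ⁻¹ = 1) :
    ∀ t ∈ Algebra.adjoin ℤ ({ζ} : Set ℂ),
      ∃ a ∈ Algebra.adjoin ℤ ({ζ + ζ⁻¹} : Set ℂ),
        ∃ b ∈ Algebra.adjoin ℤ ({ζ + ζ⁻¹} : Set ℂ), t = a + b * ζ := by
  intro t ht
  induction ht using Algebra.adjoin_induction with
  | mem x hx =>
    rcases hx with rfl
    exact ⟨0, Subalgebra.zero_mem _, 1, Subalgebra.one_mem _, by ring⟩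
  | algebraMap r =>
    exact ⟨algebraMap ℤ ℂ r, Subalgebra.algebraMap_mem _ r, 0,
      Subalgebra.zero_mem _, by ring⟩
  | add x y hx hy ihx ihy =>
    obtain ⟨a, ha, b, hb, rfl⟩ := ihx
    obtain ⟨c, hc, d, hd, rfl⟩ := ihy
    exact ⟨a + c, add_mem ha hc, b + d, add_mem hb hd, by ring⟩
  | mul x y hx hy ihx ihy =>
    obtain ⟨a, ha, b, hb, rfl⟩ := ihx
    obtain ⟨c, hc, d, hd, rfl⟩ := ihy
    have hs : (ζ + ζ⁻¹) ∈ Algebra.adjoin ℤ ({ζ + ζ⁻¹} : Set ℂ) :=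
      Algebra.self_mem_adjoin_singleton ℤ _
    refine ⟨a * c - b * d, sub_mem (mul_mem ha hc) (mul_mem hb hd),
      a * d + b * c + b * d * (ζ + ζ⁻¹),
      add_mem (add_mem (mul_mem ha hd) (mul_mem hb hc))
        (mul_mem (mul_mem hb hd) hs), ?_⟩
    linear_combination (-(b * d)) * hζ1

/-- For `n ≥ 3` and two non-parallel directions `o₁, o₂ ∈ ℤ[ζₙ] ∖ {0}`, the
complete grid (the set of intersection points of module lines in the two
directions) satisfies `ℤ[ζₙ] ⊆ G_{o₁,o₂} ⊆ M_{o₁,o₂}`, where `M_{o₁,o₂}` is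
the `ℤ[ζₙ+ζₙ⁻¹]`-span of `{o₁/(αδ−βγ), o₂/(αδ−βγ)}`. -/
theorem stmt13 (n : ℕ) (hn : 3 ≤ n) (ζ : ℂ) (hζ : IsPrimitiveRoot ζ n)
    (α β γ δ o₁ o₂ : ℂ)
    (hα : α ∈ Algebra.adjoin ℤ ({ζ + ζ⁻¹} : Set ℂ))
    (hβ : β ∈ Algebra.adjoin ℤ ({ζ + ζ⁻¹} : Set ℂ))
    (hγ : γ ∈ Algebra.adjoin ℤ ({ζ + ζ⁻¹} : Set ℂ))
    (hδ : δ ∈ Algebra.adjoin ℤ ({ζ + ζ⁻¹} : Set ℂ))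
    (ho₁ : o₁ = α + β * ζ) (ho₂ : o₂ = γ + δ * ζ)
    (ho₁0 : o₁ ≠ 0) (ho₂0 : o₂ ≠ 0)
    (hLI : LinearIndependent ℝ ![o₁, o₂])
    (Grid M : Set ℂ)
    (hGrid : Grid = {z : ℂ | (∃ t₁ ∈ Algebra.adjoin ℤ ({ζ} : Set ℂ),
        ∃ r : ℝ, z = t₁ + r • o₁) ∧
      (∃ t₂ ∈ Algebra.adjoin ℤ ({ζ} : Set ℂ), ∃ s : ℝ, z = t₂ + s • o₂)})
    (hM : M = {z : ℂ | ∃ x ∈ Algebra.adjoin ℤ ({ζ + ζ⁻¹} : Set ℂ),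
      ∃ y ∈ Algebra.adjoin ℤ ({ζ + ζ⁻¹} : Set ℂ),
        z = x * (o₁ / (α * δ - β * γ)) + y * (o₂ / (α * δ - β * γ))}) :
    ((Algebra.adjoin ℤ ({ζ} : Set ℂ) : Subalgebra ℤ ℂ) : Set ℂ) ⊆ Grid ∧
      Grid ⊆ M := by
  have hζ0 : ζ ≠ 0 := hζ.ne_zero (by omega)
  have hζnorm : ‖ζ‖ = 1 := by
    have := hζ.norm'_eq_one (by omega)
    simpa using this
  have hconjζ : (starRingEnd ℂ) ζ = ζ⁻¹ := (Complex.inv_eq_conj hζnorm).symm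
  have hζ1 : ζ * ζ⁻¹ = 1 := mul_inv_cancel₀ hζ0
  -- elements of ℤ[ζ+ζ⁻¹] are real
  have hreal : ∀ x ∈ Algebra.adjoin ℤ ({ζ + ζ⁻¹} : Set ℂ),
      (starRingEnd ℂ) x = x := by
    intro x hx
    induction hx using Algebra.adjoin_induction with
    | mem x hx =>
      rcases hx with rfl
      rw [map_add, hconjζ, map_inv₀, hconjζ, inv_inv, add_comm]
    | algebraMap r => simp [Complex.conj_eq_iff_im]
    | add x y hx hy ihx ihy => rw [map_add, ihx, ihy]
    | mul x y hx hy ihx ihy => rw [map_mul, ihx, ihy]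
  -- ζ has nonzero imaginary part
  have hζim : ζ.im ≠ 0 := by
    intro h
    have hconj : (starRingEnd ℂ) ζ = ζ := Complex.conj_eq_iff_im.2 h
    have h2 : ζ ^ 2 = 1 := by
      have h' : ζ * ζ⁻¹ = ζ * ζ := by rw [← hconjζ, hconj]
      rw [sq, ← h', hζ1]
    have hdvd := hζ.dvd_of_pow_eq_one 2 h2
    have := Nat.le_of_dvd (by norm_num) hdvd
    omega
  -- real coefficients as complex numbers
  have hre : ∀ x : ℂ, (starRingEnd ℂ) x = x → ((x.re : ℝ) : ℂ) = x := by
    intro x hx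
    exact Complex.conj_eq_iff_re.1 hx
  -- the determinant is nonzero
  have hD : α * δ - β * γ ≠ 0 := by
    intro hD0
    have hpair := LinearIndependent.pair_iff.1 hLI
    have h1 : δ.re • o₁ + (-β.re) • o₂ = 0 := by
      rw [Complex.real_smul, Complex.real_smul, Complex.ofReal_neg,
        hre δ (hreal δ hδ), hre β (hreal β hβ), ho₁, ho₂]
      linear_combination hD0
    obtain ⟨hδ0, hβ0⟩ := hpair _ _ h1
    have hδz : δ = 0 := by
      rw [← hre δ (hreal δ hδ), hδ0]; simp
    have hβz : β = 0 := by
      have h' : β.re = 0 := neg_eq_zero.1 hβ0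
      rw [← hre β (hreal β hβ), h']; simp
    have h2 : γ.re • o₁ + (-α.re) • o₂ = 0 := by
      rw [Complex.real_smul, Complex.real_smul, Complex.ofReal_neg,
        hre γ (hreal γ hγ), hre α (hreal α hα), ho₁, ho₂, hβz, hδz]
      ring
    obtain ⟨hγ0, hα0⟩ := hpair _ _ h2
    have hαz : α = 0 := by
      have h' : α.re = 0 := neg_eq_zero.1 hα0
      rw [← hre α (hreal α hα), h']; simp
    exact ho₁0 (by rw [ho₁, hαz, hβz]; ring)
  constructor
  · -- ℤ[ζ] ⊆ Grid
    intro z hz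
    rw [hGrid]
    exact ⟨⟨z, hz, 0, by simp⟩, ⟨z, hz, 0, by simp⟩⟩
  · -- Grid ⊆ M
    intro z hz
    rw [hGrid] at hz
    obtain ⟨⟨t₁, ht₁, r, hzr⟩, ⟨t₂, ht₂, s, hzs⟩⟩ := hz
    obtain ⟨a, ha, b, hb, hab⟩ := stmt13_decomp ζ hζ1 t₁ ht₁
    obtain ⟨e, he, f, hf, hef⟩ := stmt13_decomp ζ hζ1 (t₁ - t₂)
      (sub_mem ht₁ ht₂)
    -- key equation: e + f ζ = s o₂ - r o₁
    have hkey : e + f * ζ = (s : ℂ) * o₂ - (r : ℝ) * o₁ := by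
      rw [← hef]
      have := hzr.symm.trans hzs
      rw [Complex.real_smul, Complex.real_smul] at this
      linear_combination this
    -- conjugated key equation
    have hkey' : e + f * ζ⁻¹ = (s : ℂ) * (γ + δ * ζ⁻¹) - (r : ℂ) * (α + β * ζ⁻¹) := by
      have := congrArg (starRingEnd ℂ) hkey
      simp only [map_add, map_sub, map_mul, hconjζ, hreal e he, hreal f hf,
        Complex.conj_ofReal, ho₁, ho₂, hreal α hα, hreal β hβ, hreal γ hγ,
        hreal δ hδ] at this
      exact this
    have hζne : ζ - ζ⁻¹ ≠ 0 := by
      intro h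
      have : ζ = ζ⁻¹ := by linear_combination h
      rw [← hconjζ] at this
      exact hζim (Complex.conj_eq_iff_im.1 this.symm)
    -- extract coefficient equations
    have hfe : f = (s : ℂ) * δ - (r : ℂ) * β := by
      have h3 : f * (ζ - ζ⁻¹) = ((s : ℂ) * δ - (r : ℂ) * β) * (ζ - ζ⁻¹) := by
        rw [ho₁, ho₂] at hkey
        linear_combination hkey - hkey'
      exact mul_right_cancel₀ hζne h3
    have hee : e = (s : ℂ) * γ - (r : ℂ) * α := by
      rw [ho₁, ho₂] at hkey
      linear_combination hkey - ζ * hfe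
    have hrD : (r : ℂ) * (α * δ - β * γ) = γ * f - δ * e := by
      linear_combination δ * hee - γ * hfe
    rw [hM]
    refine ⟨a * δ - b * γ + (γ * f - δ * e),
      add_mem (sub_mem (mul_mem ha hδ) (mul_mem hb hγ))
        (sub_mem (mul_mem hγ hf) (mul_mem hδ he)),
      b * α - a * β, sub_mem (mul_mem hb hα) (mul_mem ha hβ), ?_⟩
    rw [div_eq_mul_inv, div_eq_mul_inv]
    have hz : z = a + b * ζ + (r : ℂ) * o₁ := by
      rw [hzr, hab, Complex.real_smul]
    rw [hz, ho₁, ho₂]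
    field_simp
    linear_combination (α + β * ζ) * hrD
end

section
/- With the notation above, the ℤ[ζₙ+ζₙ⁻¹]-module M_{o₁,o₂} = ℤ[ζₙ+ζₙ⁻¹]·o₁/(αδ−βγ) + ℤ[ζₙ+ζₙ⁻¹]·o₂/(αδ−βγ) is a ℤ-module of rank φ(n) (as an abelian group). -/
/-!
With `θ = ζ + ζ⁻¹`, the ring `ℤ[θ]` is free over `ℤ` of rank `deg θ = [ℚ(θ) : ℚ] = φ(n)/2`:
`ζ` is a root of `X² - θX + 1` over `ℚ(θ)` but is not real, whereas `ℚ(θ) ⊆ ℝ`, so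
`[ℚ(ζ) : ℚ(θ)] = 2`. Since `ℤ[θ] ⊆ ℝ` and `o₁, o₂` are `ℝ`-independent, `(x, y) ↦ x o₁ + y o₂` is
injective on `ℤ[θ]²`; the same independence gives `αδ - βγ ≠ 0` because `δ o₁ - β o₂ = αδ - βγ`.
-/

open Polynomial IntermediateField Module

section AddInv

variable {F L : Type*} [Field F] [Field L] [Algebra F L] (x : L)

theorem IntermediateField.restrictScalars_adjoin_adjoin_add_inv :
    restrictScalars F F⟮x + x⁻¹⟯⟮x⟯ = F⟮x⟯ := by
  rw [adjoin_simple_adjoin_simple]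
  refine le_antisymm (adjoin_le_iff.2 ?_) (adjoin.mono _ _ _ (by simp))
  have hx : x ∈ F⟮x⟯ := mem_adjoin_simple_self F x
  rintro z (rfl | rfl)
  · exact add_mem hx (inv_mem hx)
  · exact hx

theorem IntermediateField.natDegree_minpoly_adjoin_add_inv_le_two (hx : x ≠ 0) :
    (minpoly F⟮x + x⁻¹⟯ x).natDegree ≤ 2 := by
  set p : F⟮x + x⁻¹⟯[X] := X ^ 2 - C (AdjoinSimple.gen F (x + x⁻¹)) * X + 1
  have hp : p.Monic := by unfold p; monicity!
  have hpx : aeval x p = 0 := by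
    simp only [p, map_add, map_sub, map_mul, map_pow, map_one, aeval_X, aeval_C,
      AdjoinSimple.algebraMap_gen]
    field_simp
    ring
  calc (minpoly F⟮x + x⁻¹⟯ x).natDegree ≤ p.natDegree :=
        natDegree_le_natDegree (minpoly.min _ _ hp hpx)
    _ ≤ 2 := by unfold p; compute_degree

end AddInv

theorem Complex.im_eq_zero_of_mem_adjoin {R : Type*} [CommSemiring R] [Algebra R ℂ]
    (hR : ∀ r : R, (algebraMap R ℂ r).im = 0) {s : Set ℂ} (hs : ∀ z ∈ s, z.im = 0) {x : ℂ}
    (hx : x ∈ Algebra.adjoin R s) : x.im = 0 := by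
  induction hx using Algebra.adjoin_induction with
  | mem z hz => exact hs z hz
  | algebraMap r => exact hR r
  | add a b _ _ ha hb => simp [ha, hb]
  | mul a b _ _ ha hb => simp [ha, hb]

namespace IsPrimitiveRoot

variable {n : ℕ} {ζ : ℂ}

theorem im_add_inv_eq_zero (hζ : IsPrimitiveRoot ζ n) (hn : n ≠ 0) : (ζ + ζ⁻¹).im = 0 := by
  simp [Complex.inv_eq_conj (hζ.norm'_eq_one hn)]

theorem im_ne_zero (hζ : IsPrimitiveRoot ζ n) (hn : 3 ≤ n) : ζ.im ≠ 0 := by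
  intro h
  have hinv : ζ⁻¹ = ζ := by
    rw [Complex.inv_eq_conj (hζ.norm'_eq_one (by omega)), Complex.conj_eq_iff_im.2 h]
  have hζ2 : ζ ^ 2 = 1 := by
    rw [sq, ← mul_inv_cancel₀ (hζ.ne_zero (by omega)), hinv]
  have := Nat.le_of_dvd two_pos (hζ.dvd_of_pow_eq_one 2 hζ2)
  omega

theorem isIntegral_add_inv (hζ : IsPrimitiveRoot ζ n) (hn : n ≠ 0) : IsIntegral ℤ (ζ + ζ⁻¹) :=
  (hζ.isIntegral (Nat.pos_of_ne_zero hn)).add (hζ.inv.isIntegral (Nat.pos_of_ne_zero hn))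

theorem finrank_adjoin_eq_totient (hζ : IsPrimitiveRoot ζ n) (hn : n ≠ 0) :
    finrank ℚ ℚ⟮ζ⟯ = n.totient := by
  rw [adjoin.finrank (hζ.isIntegral (Nat.pos_of_ne_zero hn)).tower_top,
    ← cyclotomic_eq_minpoly_rat hζ (Nat.pos_of_ne_zero hn), natDegree_cyclotomic]

theorem finrank_adjoin_adjoin_add_inv (hζ : IsPrimitiveRoot ζ n) (hn : 3 ≤ n) :
    finrank ℚ⟮ζ + ζ⁻¹⟯ ℚ⟮ζ + ζ⁻¹⟯⟮ζ⟯ = 2 := by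
  have hζint : IsIntegral ℚ⟮ζ + ζ⁻¹⟯ ζ := (hζ.isIntegral (by omega)).tower_top
  rw [adjoin.finrank hζint]
  refine le_antisymm (natDegree_minpoly_adjoin_add_inv_le_two ζ (hζ.ne_zero (by omega)))
    ((minpoly.two_le_natDegree_iff hζint).2 ?_)
  rintro ⟨y, hyζ : (y : ℂ) = ζ⟩
  have hy : (y : ℂ) ∈ Algebra.adjoin ℚ {ζ + ζ⁻¹} := by
    rw [← adjoin_simple_toSubalgebra_of_isAlgebraic
      (hζ.isIntegral_add_inv (by omega)).tower_top.isAlgebraic]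
    exact y.2
  refine hζ.im_ne_zero hn (hyζ ▸ Complex.im_eq_zero_of_mem_adjoin (fun q ↦ ?_) ?_ hy)
  · simp
  · simpa using hζ.im_add_inv_eq_zero (by omega)

theorem two_mul_finrank_adjoin_add_inv (hζ : IsPrimitiveRoot ζ n) (hn : 3 ≤ n) :
    2 * finrank ℚ ℚ⟮ζ + ζ⁻¹⟯ = n.totient := by
  have : FiniteDimensional ℚ ℚ⟮ζ + ζ⁻¹⟯ :=
    adjoin.finiteDimensional (hζ.isIntegral_add_inv (by omega)).tower_top
  have : FiniteDimensional ℚ⟮ζ + ζ⁻¹⟯ ℚ⟮ζ + ζ⁻¹⟯⟮ζ⟯ :=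
    adjoin.finiteDimensional (hζ.isIntegral (by omega)).tower_top
  rw [← hζ.finrank_adjoin_eq_totient (by omega), ← restrictScalars_adjoin_adjoin_add_inv ζ,
    ← hζ.finrank_adjoin_adjoin_add_inv hn, mul_comm]
  exact finrank_mul_finrank ℚ ℚ⟮ζ + ζ⁻¹⟯ ℚ⟮ζ + ζ⁻¹⟯⟮ζ⟯

theorem two_mul_natDegree_minpoly_int_add_inv (hζ : IsPrimitiveRoot ζ n) (hn : 3 ≤ n) :
    2 * (minpoly ℤ (ζ + ζ⁻¹)).natDegree = n.totient := by
  have hθ := hζ.isIntegral_add_inv (by omega)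
  rw [← hζ.two_mul_finrank_adjoin_add_inv hn, adjoin.finrank hθ.tower_top,
    minpoly.isIntegrallyClosed_eq_field_fractions' ℚ hθ, (minpoly.monic hθ).natDegree_map]

end IsPrimitiveRoot

theorem Algebra.adjoin.rank_eq_natDegree_minpoly {R S : Type*} [CommRing R] [IsDomain R]
    [IsIntegrallyClosed R] [CommRing S] [IsDomain S] [Algebra R S] [Module.IsTorsionFree R S]
    {x : S} (hx : IsIntegral R x) :
    Module.rank R (Algebra.adjoin R {x}) = (minpoly R x).natDegree := by
  rw [rank_eq_card_basis (Algebra.adjoin.powerBasis' hx).basis, Fintype.card_fin,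
    Algebra.adjoin.powerBasis'_dim]

namespace Complex

variable {u v : ℂ}

theorem eq_zero_and_eq_zero_of_mul_add_mul_eq_zero (huv : LinearIndependent ℝ ![u, v])
    {x y : ℂ} (hx : x.im = 0) (hy : y.im = 0) (h : x * u + y * v = 0) : x = 0 ∧ y = 0 := by
  have hx' : (x.re : ℂ) = x := ext rfl (by simp [hx])
  have hy' : (y.re : ℂ) = y := ext rfl (by simp [hy])
  rw [← hx', ← hy', ← real_smul, ← real_smul] at h
  obtain ⟨hx0, hy0⟩ := LinearIndependent.pair_iff.1 huv _ _ h
  exact ⟨by rw [← hx', hx0, ofReal_zero], by rw [← hy', hy0, ofReal_zero]⟩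

theorem linearIndependent_pair_div (huv : LinearIndependent ℝ ![u, v]) {c : ℂ} (hc : c ≠ 0) :
    LinearIndependent ℝ ![u / c, v / c] := by
  refine LinearIndependent.pair_iff.2 fun s t h ↦ LinearIndependent.pair_iff.1 huv s t ?_
  rwa [← smul_div_assoc, ← smul_div_assoc, ← add_div, div_eq_zero_iff, or_iff_left hc] at h

theorem mul_sub_mul_ne_zero_of_linearIndependent {α β γ δ ζ : ℂ} (hα : α.im = 0)
    (hβ : β.im = 0) (hγ : γ.im = 0) (hδ : δ.im = 0)
    (h : LinearIndependent ℝ ![α + β * ζ, γ + δ * ζ]) : α * δ - β * γ ≠ 0 := by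
  intro hD
  obtain ⟨hδ0, hβ0⟩ := eq_zero_and_eq_zero_of_mul_add_mul_eq_zero (x := δ) (y := -β) h hδ
    (by simp [hβ]) (by linear_combination hD)
  rw [neg_eq_zero] at hβ0
  obtain ⟨-, hα0⟩ := eq_zero_and_eq_zero_of_mul_add_mul_eq_zero (x := γ) (y := -α) h hγ
    (by simp [hα]) (by rw [hβ0, hδ0]; ring)
  exact h.ne_zero 0 (by simp [neg_eq_zero.1 hα0, hβ0])

theorem rank_span_mul_add_mul {A : Submodule ℤ ℂ} [Module.Free ℤ A] (hA : ∀ x ∈ A, x.im = 0)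
    (huv : LinearIndependent ℝ ![u, v]) :
    Module.rank ℤ (Submodule.span ℤ {z | ∃ x ∈ A, ∃ y ∈ A, z = x * u + y * v}) =
      2 * Module.rank ℤ A := by
  let f : A × A →ₗ[ℤ] ℂ := (A.subtype.smulRight u).coprod (A.subtype.smulRight v)
  have hrange : {z | ∃ x ∈ A, ∃ y ∈ A, z = x * u + y * v} = LinearMap.range f := by
    ext z
    simp [f, eq_comm]
  have hf : Function.Injective f := by
    refine (injective_iff_map_eq_zero f).2 fun ⟨x, y⟩ h ↦ ?_
    obtain ⟨hx, hy⟩ := eq_zero_and_eq_zero_of_mul_add_mul_eq_zero huv (hA x x.2) (hA y y.2) h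
    exact Prod.ext (Subtype.ext hx) (Subtype.ext hy)
  rw [hrange, Submodule.span_eq, rank_range_of_injective f hf, rank_prod', two_mul]

end Complex

theorem stmt14_general (n : ℕ) (hn : 3 ≤ n) (ζ : ℂ) (hζ : IsPrimitiveRoot ζ n)
    (α β γ δ o₁ o₂ : ℂ)
    (hα : α ∈ Algebra.adjoin ℤ ({ζ + ζ⁻¹} : Set ℂ))
    (hβ : β ∈ Algebra.adjoin ℤ ({ζ + ζ⁻¹} : Set ℂ))
    (hγ : γ ∈ Algebra.adjoin ℤ ({ζ + ζ⁻¹} : Set ℂ))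
    (hδ : δ ∈ Algebra.adjoin ℤ ({ζ + ζ⁻¹} : Set ℂ))
    (ho₁ : o₁ = α + β * ζ) (ho₂ : o₂ = γ + δ * ζ)
    (hLI : LinearIndependent ℝ ![o₁, o₂])
    (M : Set ℂ)
    (hM : M = {z : ℂ | ∃ x ∈ Algebra.adjoin ℤ ({ζ + ζ⁻¹} : Set ℂ),
      ∃ y ∈ Algebra.adjoin ℤ ({ζ + ζ⁻¹} : Set ℂ),
        z = x * (o₁ / (α * δ - β * γ)) + y * (o₂ / (α * δ - β * γ))}) :
    Module.rank ℤ (Submodule.span ℤ M) = Nat.totient n := by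
  set R := Algebra.adjoin ℤ ({ζ + ζ⁻¹} : Set ℂ)
  have hθ := hζ.isIntegral_add_inv (by omega)
  have hR : ∀ x ∈ R, x.im = 0 := fun x ↦ Complex.im_eq_zero_of_mem_adjoin (by simp)
    (by simpa using hζ.im_add_inv_eq_zero (by omega))
  have hD : α * δ - β * γ ≠ 0 := Complex.mul_sub_mul_ne_zero_of_linearIndependent
    (hR α hα) (hR β hβ) (hR γ hγ) (hR δ hδ) (ho₁ ▸ ho₂ ▸ hLI)
  have : Module.Free ℤ (Subalgebra.toSubmodule R) :=
    .of_basis (Algebra.adjoin.powerBasis' hθ).basis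
  calc Module.rank ℤ (Submodule.span ℤ M) = 2 * Module.rank ℤ R := by
        rw [hM]
        exact Complex.rank_span_mul_add_mul (A := Subalgebra.toSubmodule R) hR
          (Complex.linearIndependent_pair_div hLI hD)
    _ = n.totient := by
        rw [Algebra.adjoin.rank_eq_natDegree_minpoly hθ,
          ← hζ.two_mul_natDegree_minpoly_int_add_inv hn]
        norm_cast

/-- With the notation above, the `ℤ[ζₙ+ζₙ⁻¹]`-module
`M_{o₁,o₂} = ℤ[ζₙ+ζₙ⁻¹]·o₁/(αδ−βγ) + ℤ[ζₙ+ζₙ⁻¹]·o₂/(αδ−βγ)` is a ℤ-module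
of rank `φ(n)` (as an abelian group). -/
theorem stmt14 (n : ℕ) (hn : 3 ≤ n) (ζ : ℂ) (hζ : IsPrimitiveRoot ζ n)
    (α β γ δ o₁ o₂ : ℂ)
    (hα : α ∈ Algebra.adjoin ℤ ({ζ + ζ⁻¹} : Set ℂ))
    (hβ : β ∈ Algebra.adjoin ℤ ({ζ + ζ⁻¹} : Set ℂ))
    (hγ : γ ∈ Algebra.adjoin ℤ ({ζ + ζ⁻¹} : Set ℂ))
    (hδ : δ ∈ Algebra.adjoin ℤ ({ζ + ζ⁻¹} : Set ℂ))
    (ho₁ : o₁ = α + β * ζ) (ho₂ : o₂ = γ + δ * ζ)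
    (ho₁0 : o₁ ≠ 0) (ho₂0 : o₂ ≠ 0)
    (hLI : LinearIndependent ℝ ![o₁, o₂])
    (M : Set ℂ)
    (hM : M = {z : ℂ | ∃ x ∈ Algebra.adjoin ℤ ({ζ + ζ⁻¹} : Set ℂ),
      ∃ y ∈ Algebra.adjoin ℤ ({ζ + ζ⁻¹} : Set ℂ),
        z = x * (o₁ / (α * δ - β * γ)) + y * (o₂ / (α * δ - β * γ))}) :
    Module.rank ℤ (Submodule.span ℤ M) = Nat.totient n :=
  stmt14_general n hn ζ hζ α β γ δ o₁ o₂ hα hβ hγ hδ ho₁ ho₂ hLI M hM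
end
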